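/- Jump–power inequality: for all real x, y > 0 and γ ∈ (1,2], (x − y)² ≤ (x^{γ/2} − y^{γ/2})²·(x^{1−γ/2} + y^{1−γ/2})². -/

import Mathlib

/-!
Expanding the product gives `(x^a - y^a)(x^(1-a) + y^(1-a)) = x - y + (x^a y^(1-a) - y^a x^(1-a))`,
and for `y ≤ x` the bracket is nonnegative as soon as `a ≥ 1/2`: dividing it by `(xy)^(1-a)` leaves
`x^(2a-1) - y^(2a-1) ≥ 0`. Hence `|x - y| ≤ |x^a - y^a| (x^(1-a) + y^(1-a))`; square with `a = γ/2`.
-/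

open Real

namespace Real

variable {a x y : ℝ}

lemma rpow_mul_rpow_one_sub_le (ha : 1 / 2 ≤ a) (hy : 0 < y) (hxy : y ≤ x) :
    y ^ a * x ^ (1 - a) ≤ x ^ a * y ^ (1 - a) := by
  have hx : 0 < x := hy.trans_le hxy
  have hpow : y ^ (2 * a - 1) ≤ x ^ (2 * a - 1) := rpow_le_rpow hy.le hxy (by linarith)
  have split : ∀ z : ℝ, 0 < z → z ^ a = z ^ (1 - a) * z ^ (2 * a - 1) := fun z hz => by
    rw [← rpow_add hz]; ring_nf
  calc y ^ a * x ^ (1 - a) = x ^ (1 - a) * y ^ (1 - a) * y ^ (2 * a - 1) := by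
        rw [split y hy]; ring
    _ ≤ x ^ (1 - a) * y ^ (1 - a) * x ^ (2 * a - 1) := by gcongr
    _ = x ^ a * y ^ (1 - a) := by rw [split x hx]; ring

lemma rpow_sub_mul_rpow_one_sub_add (hx : 0 < x) (hy : 0 < y) :
    (x ^ a - y ^ a) * (x ^ (1 - a) + y ^ (1 - a))
      = x - y + (x ^ a * y ^ (1 - a) - y ^ a * x ^ (1 - a)) := by
  have hx1 : x ^ a * x ^ (1 - a) = x := by rw [← rpow_add hx]; norm_num
  have hy1 : y ^ a * y ^ (1 - a) = y := by rw [← rpow_add hy]; norm_num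
  linear_combination hx1 - hy1

lemma sub_le_rpow_sub_mul_rpow_one_sub_add (ha : 1 / 2 ≤ a) (hy : 0 < y) (hxy : y ≤ x) :
    x - y ≤ (x ^ a - y ^ a) * (x ^ (1 - a) + y ^ (1 - a)) := by
  rw [rpow_sub_mul_rpow_one_sub_add (hy.trans_le hxy) hy]
  linarith [rpow_mul_rpow_one_sub_le ha hy hxy]

lemma abs_sub_le_abs_rpow_sub_mul_rpow_one_sub_add (ha : 1 / 2 ≤ a) (hx : 0 < x) (hy : 0 < y) :
    |x - y| ≤ |x ^ a - y ^ a| * (x ^ (1 - a) + y ^ (1 - a)) := by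
  rcases le_total y x with hxy | hyx
  · have h := sub_le_rpow_sub_mul_rpow_one_sub_add ha hy hxy
    rw [abs_of_nonneg (sub_nonneg.mpr hxy)]
    exact h.trans (mul_le_mul_of_nonneg_right (le_abs_self _) (by positivity))
  · have h := sub_le_rpow_sub_mul_rpow_one_sub_add ha hx hyx
    rw [abs_sub_comm, abs_sub_comm (x ^ a), add_comm (x ^ (1 - a)),
      abs_of_nonneg (sub_nonneg.mpr hyx)]
    exact h.trans (mul_le_mul_of_nonneg_right (le_abs_self _) (by positivity))

end Real

theorem stmt13_general (γ : ℝ) (h1 : 1 < γ) :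
    ∀ x y : ℝ, 0 < x → 0 < y →
      (x - y) ^ 2 ≤ (x ^ (γ / 2) - y ^ (γ / 2)) ^ 2
        * (x ^ (1 - γ / 2) + y ^ (1 - γ / 2)) ^ 2 := by
  intro x y hx hy
  have hsum : 0 < x ^ (1 - γ / 2) + y ^ (1 - γ / 2) := by positivity
  rw [← mul_pow, sq_le_sq, abs_mul, abs_of_pos hsum]
  exact abs_sub_le_abs_rpow_sub_mul_rpow_one_sub_add (by linarith) hx hy

/-- jump–power inequality. For `x, y > 0` and `γ ∈ (1,2]`,
`(x − y)² ≤ (x^{γ/2} − y^{γ/2})² (x^{1−γ/2} + y^{1−γ/2})²`. -/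
theorem stmt13 (γ : ℝ) (h1 : 1 < γ) (h2 : γ ≤ 2) :
    ∀ x y : ℝ, 0 < x → 0 < y →
      (x - y) ^ 2 ≤ (x ^ (γ / 2) - y ^ (γ / 2)) ^ 2
        * (x ^ (1 - γ / 2) + y ^ (1 - γ / 2)) ^ 2 :=
  stmt13_general γ h1
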